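/- Let M be a nonnegative symmetric d×d real matrix and let h ∈ ℝ^d be a nonnegative vector that is strictly positive on supp(M). Suppose the restriction of M to supp(M) is irreducible, and suppose that for each i ∈ supp(M) we are given a nonnegative symmetric d×d real matrix M⟨i⟩ and a linear map T⟨i⟩ : ℝ^d → ℝ^d such that: (Inheritance) (Mv)_i = ⟨T⟨i⟩v, M⟨i⟩ T⟨i⟩h⟩ for every i ∈ supp(M) and every v ∈ ℝ^d; (Pullback) Σ_{i ∈ supp(M)} h_i · ⟨T⟨i⟩v, M⟨i⟩ T⟨i⟩v⟩ ≥ ⟨v, Mv⟩ for every v ∈ ℝ^d; and each matrix M⟨i⟩ is hyperbolic. Then M is hyperbolic. -/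

import Mathlib

open scoped Classical BigOperators
open Matrix

noncomputable section

/-- A symmetric real matrix `M` is hyperbolic if
`⟨v, Mw⟩² ≥ ⟨v, Mv⟩·⟨w, Mw⟩` for all `v, w` with `⟨w, Mw⟩ > 0`. -/
def IsHyperbolic {d : ℕ} (M : Matrix (Fin d) (Fin d) ℝ) : Prop :=
  ∀ v w : Fin d → ℝ, 0 < w ⬝ᵥ M.mulVec w →
    (v ⬝ᵥ M.mulVec v) * (w ⬝ᵥ M.mulVec w) ≤ (v ⬝ᵥ M.mulVec w) ^ 2

/-- The support of a matrix: the set of indices whose row (equivalently, for a symmetric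
matrix, column) is nonzero. -/
def matSupp {d : ℕ} (M : Matrix (Fin d) (Fin d) ℝ) : Finset (Fin d) :=
  Finset.univ.filter (fun i => ∃ j, M i j ≠ 0)

/-!
Applying the hyperbolicity of `M⟨i⟩` to the pair `T⟨i⟩v, T⟨i⟩h` and using inheritance turns the
pullback inequality into `⟨v, Mv⟩ ≤ ∑ᵢ hᵢ (Mv)ᵢ² / (Mh)ᵢ`. After the diagonal rescaling
`N = D M D` with `Dᵢ² = hᵢ / (Mh)ᵢ` this reads `N ≤ N²` as quadratic forms, so every eigenvalue
of `N` is `≤ 0` or `≥ 1`. Moreover `N` fixes `z = D M h`, which is positive on the support, so by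
the Perron–Frobenius argument (a strong minimum principle along the irreducible support) every
eigenvector of eigenvalue `≥ 1` is a multiple of `z`. Hence `⟨v, Mv⟩ ≤ 0` on the hyperplane
`⟨v, Mh⟩ = 0`, and a quadratic form that is nonpositive on a hyperplane is hyperbolic.
-/

theorem Matrix.IsHermitian.dotProduct_mulVec_nonpos_of_orthogonal_eigenvectors {n : Type*}
    [Fintype n] {A : Matrix n n ℝ} (hA : A.IsHermitian) {x : n → ℝ}
    (hx : ∀ (μ : ℝ) (u : n → ℝ), A *ᵥ u = μ • u → 0 < μ → x ⬝ᵥ u = 0) :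
    x ⬝ᵥ A *ᵥ x ≤ 0 := by
  let c : n → ℝ := fun k => x ⬝ᵥ ⇑(hA.eigenvectorBasis k)
  have hx_eq : x = ∑ k, c k • ⇑(hA.eigenvectorBasis k) := by
    have := congrArg WithLp.ofLp (hA.eigenvectorBasis.sum_repr' (WithLp.toLp 2 x))
    simpa [c, EuclideanSpace.inner_eq_star_dotProduct] using this.symm
  have hquad : x ⬝ᵥ A *ᵥ x = ∑ k, hA.eigenvalues k * c k ^ 2 := by
    nth_rw 2 [hx_eq]
    simp only [mulVec_sum, mulVec_smul, hA.mulVec_eigenvectorBasis, dotProduct_sum,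
      dotProduct_smul, smul_eq_mul]
    exact Finset.sum_congr rfl fun k _ => by ring
  rw [hquad]
  refine Finset.sum_nonpos fun k _ => ?_
  rcases le_or_gt (hA.eigenvalues k) 0 with hk | hk
  · exact mul_nonpos_of_nonpos_of_nonneg hk (sq_nonneg _)
  · simp [c, hx _ _ (hA.mulVec_eigenvectorBasis k) hk]

theorem Matrix.apply_eq_zero_of_reflTransGen {n : Type*} [Fintype n] {N : Matrix n n ℝ}
    (hN : ∀ i j, 0 ≤ N i j) {w : n → ℝ} (hw : 0 ≤ w) (hNw : ∀ a, w a = 0 → (N *ᵥ w) a ≤ 0)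
    {i j : n} (hi : w i = 0) (hij : Relation.ReflTransGen (fun a b => N a b ≠ 0) i j) :
    w j = 0 := by
  induction hij with
  | refl => exact hi
  | @tail a b _ hab ha =>
    have hterm : ∀ k ∈ Finset.univ, 0 ≤ N a k * w k := fun k _ => mul_nonneg (hN a k) (hw k)
    have hsum : ∑ k, N a k * w k = 0 := le_antisymm (hNw a ha) (Finset.sum_nonneg hterm)
    have hb := (Finset.sum_eq_zero_iff_of_nonneg hterm).mp hsum b (Finset.mem_univ b)
    exact (mul_eq_zero.mp hb).resolve_left hab

section Support
variable {d : ℕ} {M : Matrix (Fin d) (Fin d) ℝ}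

theorem apply_eq_zero_of_notMem_matSupp {i : Fin d} (hi : i ∉ matSupp M) (j : Fin d) :
    M i j = 0 := by
  simp only [matSupp, Finset.mem_filter, Finset.mem_univ, true_and, not_exists, not_not] at hi
  exact hi j

theorem mulVec_apply_eq_zero_of_notMem_matSupp {i : Fin d} (hi : i ∉ matSupp M)
    (x : Fin d → ℝ) : (M *ᵥ x) i = 0 := by
  simp [mulVec, dotProduct, apply_eq_zero_of_notMem_matSupp hi]

theorem mulVec_congr_of_eqOn_matSupp (hM : M.IsSymm) {x y : Fin d → ℝ}
    (hxy : ∀ j ∈ matSupp M, x j = y j) : M *ᵥ x = M *ᵥ y := by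
  funext i
  simp only [mulVec, dotProduct]
  refine Finset.sum_congr rfl fun j _ => ?_
  by_cases hj : j ∈ matSupp M
  · rw [hxy j hj]
  · rw [← hM.apply, apply_eq_zero_of_notMem_matSupp hj, zero_mul, zero_mul]

theorem mulVec_apply_pos_of_mem_matSupp (hM : M.IsSymm) (hMnn : ∀ i j, 0 ≤ M i j)
    {x : Fin d → ℝ} (hx : ∀ j ∈ matSupp M, 0 < x j) {i : Fin d} (hi : i ∈ matSupp M) :
    0 < (M *ᵥ x) i := by
  have hterm : ∀ j, 0 ≤ M i j * x j := fun j => by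
    by_cases hj : j ∈ matSupp M
    · exact mul_nonneg (hMnn i j) (hx j hj).le
    · rw [← hM.apply, apply_eq_zero_of_notMem_matSupp hj, zero_mul]
  obtain ⟨j, hij⟩ := (Finset.mem_filter.mp hi).2
  have hj : j ∈ matSupp M := Finset.mem_filter.mpr ⟨Finset.mem_univ j, ⟨i, hM.apply i j ▸ hij⟩⟩
  exact Finset.sum_pos' (fun j _ => hterm j)
    ⟨j, Finset.mem_univ j, mul_pos ((hMnn i j).lt_of_ne' hij) (hx j hj)⟩

end Support

theorem exists_eq_smul_of_mulVec_eq_smul {d : ℕ} {N : Matrix (Fin d) (Fin d) ℝ}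
    (hN : ∀ i j, 0 ≤ N i j)
    (hirr : ∀ i ∈ matSupp N, ∀ j ∈ matSupp N, Relation.ReflTransGen (fun a b => N a b ≠ 0) i j)
    {z : Fin d → ℝ} (hz : ∀ i ∈ matSupp N, 0 < z i) (hNz : N *ᵥ z = z)
    {u : Fin d → ℝ} {μ : ℝ} (hu : N *ᵥ u = μ • u) (hμ : 1 ≤ μ) : ∃ c : ℝ, u = c • z := by
  have hu0 : ∀ i ∉ matSupp N, u i = 0 := fun i hi => by
    have := congrFun hu i
    rw [mulVec_apply_eq_zero_of_notMem_matSupp hi, Pi.smul_apply, smul_eq_mul] at this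
    exact (mul_eq_zero.mp this.symm).resolve_left (by linarith)
  have hz0 : ∀ i ∉ matSupp N, z i = 0 := fun i hi => by
    rw [← hNz, mulVec_apply_eq_zero_of_notMem_matSupp hi]
  rcases (matSupp N).eq_empty_or_nonempty with hS | hS
  · exact ⟨0, funext fun i => by simp [hu0 i (by simp [hS])]⟩
  obtain ⟨i₀, hi₀, hmax⟩ := (matSupp N).exists_max_image (fun i => |u i| / z i) hS
  set c := |u i₀| / z i₀
  have hci₀ : c * z i₀ = |u i₀| := div_mul_cancel₀ _ (hz i₀ hi₀).ne'
  have huc : ∀ j, |u j| ≤ c * z j := fun j => by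
    by_cases hj : j ∈ matSupp N
    · exact (div_le_iff₀ (hz j hj)).mp (hmax j hj)
    · simp [hu0 j hj, hz0 j hj]
  -- For `v = ±u` with `v i₀ ≥ 0`, the vector `c • z - v ≥ 0` vanishes at `i₀`.
  have key : ∀ v : Fin d → ℝ, N *ᵥ v = μ • v → (∀ j, |v j| = |u j|) → v i₀ = |u i₀| →
      v = c • z := by
    intro v hv habs hvi₀
    have hw : 0 ≤ c • z - v := fun j => by
      simpa using (le_abs_self (v j)).trans ((habs j).trans_le (huc j))
    have hNw : ∀ a, (c • z - v) a = 0 → (N *ᵥ (c • z - v)) a ≤ 0 := fun a ha => by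
      have hva : v a = c * z a := by simpa [sub_eq_zero, eq_comm] using ha
      have : 0 ≤ c * z a := (abs_nonneg _).trans (huc a)
      simp only [mulVec_sub, mulVec_smul, hNz, hv, Pi.sub_apply, Pi.smul_apply, smul_eq_mul, hva]
      nlinarith
    funext j
    by_cases hj : j ∈ matSupp N
    · have := apply_eq_zero_of_reflTransGen hN hw hNw (by simp [hvi₀, hci₀])
        (hirr i₀ hi₀ j hj)
      simpa [sub_eq_zero, eq_comm] using this
    · simpa [hz0 j hj, hu0 j hj] using habs j
  rcases abs_choice (u i₀) with h | h
  · exact ⟨c, key u hu (fun _ => rfl) h.symm⟩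
  · refine ⟨-c, ?_⟩
    have := key (-u) (by rw [mulVec_neg, hu, smul_neg]) (fun j => abs_neg (u j)) (by simp [h])
    rw [neg_smul, ← this, neg_neg]

theorem dotProduct_mulVec_nonpos_of_le_dotProduct_mulVec_self {d : ℕ}
    {N : Matrix (Fin d) (Fin d) ℝ} (hNsym : N.IsSymm) (hN : ∀ i j, 0 ≤ N i j)
    (hirr : ∀ i ∈ matSupp N, ∀ j ∈ matSupp N, Relation.ReflTransGen (fun a b => N a b ≠ 0) i j)
    {z : Fin d → ℝ} (hz : ∀ i ∈ matSupp N, 0 < z i) (hNz : N *ᵥ z = z)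
    (hsq : ∀ x, x ⬝ᵥ N *ᵥ x ≤ N *ᵥ x ⬝ᵥ N *ᵥ x) {x : Fin d → ℝ} (hx : x ⬝ᵥ z = 0) :
    x ⬝ᵥ N *ᵥ x ≤ 0 := by
  refine (isHermitian_iff_isSymm.mpr hNsym).dotProduct_mulVec_nonpos_of_orthogonal_eigenvectors
    fun μ u hu hμ => ?_
  rcases eq_or_ne u 0 with rfl | hu0
  · exact dotProduct_zero x
  have huu : 0 < u ⬝ᵥ u := (Finset.sum_nonneg fun i _ => mul_self_nonneg (u i)).lt_of_ne
    (Ne.symm (dotProduct_self_eq_zero.not.mpr hu0))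
  have hμ₁ : 1 ≤ μ := by
    have h := hsq u
    simp only [hu, dotProduct_smul, smul_dotProduct, smul_eq_mul] at h
    exact le_of_mul_le_mul_right (by simpa using le_of_mul_le_mul_left h hμ) huu
  obtain ⟨c, rfl⟩ := exists_eq_smul_of_mulVec_eq_smul hN hirr hz hNz hu hμ₁
  rw [dotProduct_smul, hx, smul_zero]

section Rescaling
variable {n : Type*} [Fintype n] [DecidableEq n] (M : Matrix n n ℝ) (g : n → ℝ)

theorem diagonal_mul_mul_diagonal_apply (i j : n) :
    (diagonal g * M * diagonal g) i j = g i * M i j * g j := by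
  simp [diagonal_mul, mul_diagonal]

theorem diagonal_mul_mul_diagonal_mulVec (x : n → ℝ) :
    (diagonal g * M * diagonal g) *ᵥ x = g * M *ᵥ (g * x) := by
  have hdiag : ∀ w, diagonal g *ᵥ w = g * w := fun w => funext (mulVec_diagonal g w)
  simp only [← mulVec_mulVec, hdiag]

theorem dotProduct_diagonal_mul_mul_diagonal_mulVec (x : n → ℝ) :
    x ⬝ᵥ (diagonal g * M * diagonal g) *ᵥ x = (g * x) ⬝ᵥ M *ᵥ (g * x) := by
  simp only [diagonal_mul_mul_diagonal_mulVec, dotProduct, Pi.mul_apply]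
  exact Finset.sum_congr rfl fun i _ => by ring

end Rescaling

theorem dotProduct_mulVec_nonpos_of_le_weighted_dotProduct {d : ℕ}
    {M : Matrix (Fin d) (Fin d) ℝ} (hMsym : M.IsSymm) (hMnn : ∀ i j, 0 ≤ M i j)
    (hirr : ∀ i ∈ matSupp M, ∀ j ∈ matSupp M, Relation.ReflTransGen (fun a b => M a b ≠ 0) i j)
    {g : Fin d → ℝ} (hg : ∀ i, 0 < g i) {y : Fin d → ℝ} (hy : ∀ i ∈ matSupp M, 0 < y i)
    (hMy : M *ᵥ (g * g * y) = y) (hsq : ∀ v, v ⬝ᵥ M *ᵥ v ≤ (g * M *ᵥ v) ⬝ᵥ (g * M *ᵥ v))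
    {v : Fin d → ℝ} (hv : v ⬝ᵥ y = 0) : v ⬝ᵥ M *ᵥ v ≤ 0 := by
  have happly := diagonal_mul_mul_diagonal_apply M g
  have hmulVec := diagonal_mul_mul_diagonal_mulVec M g
  have hquad := dotProduct_diagonal_mul_mul_diagonal_mulVec M g
  set N := diagonal g * M * diagonal g
  have hNM : ∀ a b, N a b ≠ 0 ↔ M a b ≠ 0 := fun a b => by
    simp [happly, (hg a).ne', (hg b).ne']
  have hrel : (fun a b => N a b ≠ 0) = (fun a b => M a b ≠ 0) := by
    ext a b
    exact hNM a b
  have hsupp : matSupp N = matSupp M := Finset.filter_congr fun i _ => by simp only [hNM]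
  have hgv : g * (v / g) = v := funext fun i => mul_div_cancel₀ (v i) (hg i).ne'
  have hxz : (v / g) ⬝ᵥ (g * y) = 0 := by
    rw [← hv]
    refine Finset.sum_congr rfl fun i _ => ?_
    simp only [Pi.div_apply, Pi.mul_apply]
    field_simp [(hg i).ne']
  have h := dotProduct_mulVec_nonpos_of_le_dotProduct_mulVec_self (N := N) (z := g * y)
    (IsSymm.ext fun a b => by rw [happly, happly, hMsym.apply]; ring)
    (fun a b => happly a b ▸ mul_nonneg (mul_nonneg (hg a).le (hMnn a b)) (hg b).le)
    (by rw [hsupp, hrel]; exact hirr)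
    (by rw [hsupp]; exact fun i hi => mul_pos (hg i) (hy i hi))
    (by rw [hmulVec, ← mul_assoc, hMy])
    (fun x => by rw [hquad, hmulVec]; exact hsq (g * x))
    hxz
  rwa [hquad, hgv] at h

theorem dotProduct_mulVec_nonpos_of_le_sum {d : ℕ} {M : Matrix (Fin d) (Fin d) ℝ}
    (hMsym : M.IsSymm) (hMnn : ∀ i j, 0 ≤ M i j)
    (hirr : ∀ i ∈ matSupp M, ∀ j ∈ matSupp M, Relation.ReflTransGen (fun a b => M a b ≠ 0) i j)
    {h : Fin d → ℝ} (hh : ∀ i ∈ matSupp M, 0 < h i)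
    (hbound : ∀ v, v ⬝ᵥ M *ᵥ v ≤ ∑ i ∈ matSupp M, h i * (M *ᵥ v) i ^ 2 / (M *ᵥ h) i)
    {v : Fin d → ℝ} (hv : v ⬝ᵥ M *ᵥ h = 0) : v ⬝ᵥ M *ᵥ v ≤ 0 := by
  have hMh : ∀ i ∈ matSupp M, 0 < (M *ᵥ h) i := fun i hi =>
    mulVec_apply_pos_of_mem_matSupp hMsym hMnn hh hi
  set g : Fin d → ℝ := fun i => if i ∈ matSupp M then √(h i / (M *ᵥ h) i) else 1
  have hg : ∀ i, 0 < g i := fun i => by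
    by_cases hi : i ∈ matSupp M
    · simpa [g, hi] using div_pos (hh i hi) (hMh i hi)
    · simp [g, hi]
  have hgg : ∀ i ∈ matSupp M, g i * g i = h i / (M *ᵥ h) i := fun i hi => by
    simpa [g, hi] using Real.mul_self_sqrt (div_pos (hh i hi) (hMh i hi)).le
  refine dotProduct_mulVec_nonpos_of_le_weighted_dotProduct hMsym hMnn hirr hg hMh ?_ ?_ hv
  · refine mulVec_congr_of_eqOn_matSupp hMsym fun j hj => ?_
    rw [Pi.mul_apply, Pi.mul_apply, hgg j hj, div_mul_cancel₀ _ (hMh j hj).ne']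
  · intro u
    refine (hbound u).trans ((Finset.sum_le_sum fun i hi => ?_).trans
      (Finset.sum_le_sum_of_subset_of_nonneg (Finset.subset_univ _)
        fun i _ _ => mul_self_nonneg _))
    rw [Pi.mul_apply, mul_mul_mul_comm, hgg i hi]
    exact le_of_eq (by ring)

theorem IsHyperbolic.dotProduct_mulVec_le_div {d : ℕ} {A : Matrix (Fin d) (Fin d) ℝ}
    (hA : IsHyperbolic A) (v : Fin d → ℝ) {w : Fin d → ℝ} (hw : 0 < w ⬝ᵥ A *ᵥ w) :
    v ⬝ᵥ A *ᵥ v ≤ (v ⬝ᵥ A *ᵥ w) ^ 2 / (w ⬝ᵥ A *ᵥ w) :=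
  (le_div_iff₀ hw).mpr (hA v w hw)

theorem isHyperbolic_of_dotProduct_mulVec_nonpos {d : ℕ} {M : Matrix (Fin d) (Fin d) ℝ}
    (hM : M.IsSymm) (p : Fin d → ℝ) (hp : ∀ v, v ⬝ᵥ p = 0 → v ⬝ᵥ M *ᵥ v ≤ 0) :
    IsHyperbolic M := by
  intro v w hw
  have hwp : w ⬝ᵥ p ≠ 0 := fun h0 => (hp w h0).not_gt hw
  obtain ⟨t, ht⟩ : ∃ t, t * (w ⬝ᵥ p) = -(v ⬝ᵥ p) := ⟨_, div_mul_cancel₀ _ hwp⟩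
  have hvt : (v + t • w) ⬝ᵥ p = 0 := by
    rw [add_dotProduct, smul_dotProduct, smul_eq_mul, ht, add_neg_cancel]
  have hexp : (v + t • w) ⬝ᵥ M *ᵥ (v + t • w) =
      v ⬝ᵥ M *ᵥ v + 2 * t * (v ⬝ᵥ M *ᵥ w) + t ^ 2 * (w ⬝ᵥ M *ᵥ w) := by
    have hwv : w ⬝ᵥ M *ᵥ v = v ⬝ᵥ M *ᵥ w := by
      rw [dotProduct_mulVec, ← mulVec_transpose, hM.eq, dotProduct_comm]
    simp only [mulVec_add, mulVec_smul, dotProduct_add, add_dotProduct, smul_dotProduct,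
      dotProduct_smul, smul_eq_mul, hwv]
    ring
  have hneg := hp _ hvt
  rw [hexp] at hneg
  -- `A·(C + 2tB + t²A) = (AC - B²) + (B + tA)²` with `A = ⟨w, Mw⟩`, `B = ⟨v, Mw⟩`, `C = ⟨v, Mv⟩`.
  nlinarith [sq_nonneg (v ⬝ᵥ M *ᵥ w + t * (w ⬝ᵥ M *ᵥ w)),
    mul_nonpos_of_nonpos_of_nonneg hneg hw.le]

theorem local_global_principle_general {d : ℕ}
    (M : Matrix (Fin d) (Fin d) ℝ)
    (hMsym : M.IsSymm)
    (hMnn : ∀ i j, 0 ≤ M i j)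
    (h : Fin d → ℝ)
    (hhpos : ∀ i ∈ matSupp M, 0 < h i)
    (hirr : ∀ i ∈ matSupp M, ∀ j ∈ matSupp M,
      Relation.ReflTransGen (fun a b => M a b ≠ 0) i j)
    (Mi : Fin d → Matrix (Fin d) (Fin d) ℝ)
    (T : Fin d → (Fin d → ℝ) →ₗ[ℝ] (Fin d → ℝ))
    (hInh : ∀ i ∈ matSupp M, ∀ v : Fin d → ℝ,
      M.mulVec v i = (T i v) ⬝ᵥ (Mi i).mulVec (T i h))
    (hPull : ∀ v : Fin d → ℝ,
      v ⬝ᵥ M.mulVec v ≤ ∑ i ∈ matSupp M, h i * ((T i v) ⬝ᵥ (Mi i).mulVec (T i v)))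
    (hHyp : ∀ i ∈ matSupp M, IsHyperbolic (Mi i)) :
    IsHyperbolic M := by
  refine isHyperbolic_of_dotProduct_mulVec_nonpos hMsym (M *ᵥ h) fun v hv => ?_
  refine dotProduct_mulVec_nonpos_of_le_sum hMsym hMnn hirr hhpos (fun u => ?_) hv
  refine (hPull u).trans (Finset.sum_le_sum fun i hi => ?_)
  have hTh : 0 < T i h ⬝ᵥ Mi i *ᵥ T i h :=
    hInh i hi h ▸ mulVec_apply_pos_of_mem_matSupp hMsym hMnn hhpos hi
  have hlocal := (hHyp i hi).dotProduct_mulVec_le_div (T i u) hTh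
  rw [← hInh i hi, ← hInh i hi] at hlocal
  rw [mul_div_assoc]
  exact mul_le_mul_of_nonneg_left hlocal (hhpos i hi).le

/-- **The local–global principle for hyperbolic matrices.**  Let `M` be a nonnegative
symmetric matrix, irreducible on its support, and let `h` be a nonnegative vector which is
strictly positive on the support of `M`.  If matrices `M⟨i⟩` and linear maps `T⟨i⟩`
satisfy the inheritance and pullback properties, and each `M⟨i⟩` is hyperbolic, then `M`
is hyperbolic. -/
theorem local_global_principle {d : ℕ}
    (M : Matrix (Fin d) (Fin d) ℝ)
    (hMsym : M.IsSymm)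
    (hMnn : ∀ i j, 0 ≤ M i j)
    (h : Fin d → ℝ)
    (hhnn : ∀ i, 0 ≤ h i)
    (hhpos : ∀ i ∈ matSupp M, 0 < h i)
    (hirr : ∀ i ∈ matSupp M, ∀ j ∈ matSupp M,
      Relation.ReflTransGen (fun a b => M a b ≠ 0) i j)
    (Mi : Fin d → Matrix (Fin d) (Fin d) ℝ)
    (hMinn : ∀ i ∈ matSupp M, ∀ a b, 0 ≤ Mi i a b)
    (hMisym : ∀ i ∈ matSupp M, (Mi i).IsSymm)
    (T : Fin d → (Fin d → ℝ) →ₗ[ℝ] (Fin d → ℝ))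
    (hInh : ∀ i ∈ matSupp M, ∀ v : Fin d → ℝ,
      M.mulVec v i = (T i v) ⬝ᵥ (Mi i).mulVec (T i h))
    (hPull : ∀ v : Fin d → ℝ,
      v ⬝ᵥ M.mulVec v ≤ ∑ i ∈ matSupp M, h i * ((T i v) ⬝ᵥ (Mi i).mulVec (T i v)))
    (hHyp : ∀ i ∈ matSupp M, IsHyperbolic (Mi i)) :
    IsHyperbolic M :=
  local_global_principle_general M hMsym hMnn h hhpos hirr Mi T hInh hPull hHyp
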